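/- For h ≥ 1 and α ∈ (1,3), |η_α(h) - η_α| ≤ (η_α + ζ(α))·h, where η_α(h) = h·Σ_{m≥1} (1 - sinc²(hm/2))/(hm)^α and η_α = ∫₀^∞ (1 - sinc²(s/2))/s^α ds. -/

import Mathlib

open MeasureTheory

noncomputable def sinc (x : ℝ) : ℝ := if x = 0 then 1 else Real.sin x / x

noncomputable def fa (α s : ℝ) : ℝ := (1 - (sinc (s / 2)) ^ 2) / s ^ α

noncomputable def zetaR (s : ℝ) : ℝ := ∑' m : ℕ, ((m : ℝ) + 1) ^ (-s)

lemma sinc_sq_le_one (x : ℝ) : sinc x ^ 2 ≤ 1 := by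
  unfold sinc
  split_ifs with hx
  · norm_num
  · rw [sq_le_one_iff_abs_le_one, abs_div]
    exact div_le_one_of_le₀ Real.abs_sin_le_abs (abs_nonneg x)

lemma fa_nonneg (α s : ℝ) (hs : 0 ≤ s) : 0 ≤ fa α s := by
  unfold fa
  apply div_nonneg
  · linarith [sinc_sq_le_one (s / 2)]
  · exact Real.rpow_nonneg hs _

lemma fa_le (α s : ℝ) (hs : 0 < s) : fa α s ≤ s ^ (-α) := by
  unfold fa
  rw [Real.rpow_neg hs.le, div_eq_mul_inv]
  have h1 : 1 - sinc (s / 2) ^ 2 ≤ 1 := by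
    have := sq_nonneg (sinc (s / 2)); linarith
  exact mul_le_of_le_one_left (by positivity) h1

lemma zeta_summable {α : ℝ} (hα : 1 < α) :
    Summable (fun m : ℕ => ((m : ℝ) + 1) ^ (-α)) := by
  have h : Summable (fun n : ℕ => (n : ℝ) ^ (-α)) :=
    Real.summable_nat_rpow.2 (by linarith)
  have := (summable_nat_add_iff 1).2 h
  convert this using 2 with m
  push_cast
  exacts [rfl, by norm_cast]

theorem stmt_4 (α : ℝ) (hα : 1 < α) (hα3 : α < 3) (h : ℝ) (hh : 1 ≤ h) :
    |h * (∑' m : ℕ, fa α ((m + 1) * h)) - ∫ s in Set.Ioi (0 : ℝ), fa α s|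
      ≤ ((∫ s in Set.Ioi (0 : ℝ), fa α s) + zetaR α) * h := by
  have hh0 : (0:ℝ) < h := by linarith
  have hI : 0 ≤ ∫ s in Set.Ioi (0 : ℝ), fa α s :=
    setIntegral_nonneg measurableSet_Ioi (fun s hs => fa_nonneg α s hs.le)
  have hzsum := zeta_summable hα
  have hterm : ∀ m : ℕ, fa α ((m + 1) * h) ≤ ((m : ℝ) + 1) ^ (-α) := by
    intro m
    have hm1 : (0:ℝ) < (m : ℝ) + 1 := by positivity
    have hs : (0:ℝ) < ((m : ℝ) + 1) * h := by positivity
    refine (fa_le α _ hs).trans ?_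
    rw [Real.mul_rpow hm1.le hh0.le]
    have : h ^ (-α) ≤ 1 :=
      Real.rpow_le_one_of_one_le_of_nonpos hh (by linarith)
    calc ((m:ℝ)+1) ^ (-α) * h ^ (-α) ≤ ((m:ℝ)+1) ^ (-α) * 1 := by
          exact mul_le_mul_of_nonneg_left this (by positivity)
      _ = ((m:ℝ)+1) ^ (-α) := mul_one _
  have hfsum : Summable (fun m : ℕ => fa α ((m + 1) * h)) :=
    Summable.of_nonneg_of_le (fun m => fa_nonneg _ _ (by positivity)) hterm hzsum
  have hS : (∑' m : ℕ, fa α ((m + 1) * h)) ≤ zetaR α :=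
    Summable.tsum_le_tsum hterm hfsum hzsum
  have hSnn : 0 ≤ ∑' m : ℕ, fa α ((m + 1) * h) :=
    tsum_nonneg (fun m => fa_nonneg _ _ (by positivity))
  have hznn : 0 ≤ zetaR α := tsum_nonneg (fun m => Real.rpow_nonneg (by positivity) _)
  rw [abs_le]
  constructor <;> nlinarith
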